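/- If X is a regular space, then d(X) ≤ πχ(X)^(c(X)). -/

import Mathlib

open Cardinal Set TopologicalSpace

universe u

/-- The density of a space: the least cardinality of a dense subset. -/
noncomputable def dens (X : Type u) [TopologicalSpace X] : Cardinal.{u} :=
  sInf {c : Cardinal.{u} | ∃ D : Set X, Dense D ∧ #D = c}

/-- A local π-base at a point: a family of nonempty open sets such that every
open set containing the point contains a member of the family. -/
def IsLocalPiBase (X : Type u) [TopologicalSpace X] (x : X) (𝒱 : Set (Set X)) : Prop :=
  (∀ V ∈ 𝒱, IsOpen V ∧ V.Nonempty) ∧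
    ∀ U : Set X, IsOpen U → x ∈ U → ∃ V ∈ 𝒱, V ⊆ U

/-- The π-character at a point: the least infinite cardinality of a local π-base. -/
noncomputable def piCharPoint (X : Type u) [TopologicalSpace X] (x : X) : Cardinal.{u} :=
  sInf {κ : Cardinal.{u} | ℵ₀ ≤ κ ∧ ∃ 𝒱 : Set (Set X), IsLocalPiBase X x 𝒱 ∧ #𝒱 ≤ κ}

/-- The π-character of a space. -/
noncomputable def piChar (X : Type u) [TopologicalSpace X] : Cardinal.{u} :=
  ⨆ x : X, piCharPoint X x

/-- A π-base for a space. -/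
def IsPiBase (X : Type u) [TopologicalSpace X] (𝒱 : Set (Set X)) : Prop :=
  (∀ V ∈ 𝒱, IsOpen V ∧ V.Nonempty) ∧
    ∀ U : Set X, IsOpen U → U.Nonempty → ∃ V ∈ 𝒱, V ⊆ U

/-- The π-weight of a space: the least infinite cardinality of a π-base. -/
noncomputable def piWeight (X : Type u) [TopologicalSpace X] : Cardinal.{u} :=
  sInf {κ : Cardinal.{u} | ℵ₀ ≤ κ ∧ ∃ 𝒱 : Set (Set X), IsPiBase X 𝒱 ∧ #𝒱 ≤ κ}

/-- The cellularity of a space: the least infinite cardinal bounding the size of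
every pairwise disjoint family of nonempty open sets. -/
noncomputable def cellularity (X : Type u) [TopologicalSpace X] : Cardinal.{u} :=
  sInf {κ : Cardinal.{u} | ℵ₀ ≤ κ ∧ ∀ 𝒞 : Set (Set X),
    (∀ U ∈ 𝒞, IsOpen U ∧ U.Nonempty) → 𝒞.PairwiseDisjoint id → #𝒞 ≤ κ}

/-- The set of infinite cardinals κ witnessing the nonquasiregularity degree:
every nonempty open set U contains a nonempty set ⋂₀ 𝒱 with 𝒱 an open family of
size at most κ and ⋂_{V ∈ 𝒱} cl V ⊆ U. -/
def nqSet (X : Type u) [TopologicalSpace X] : Set Cardinal.{u} :=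
  {κ : Cardinal.{u} | ℵ₀ ≤ κ ∧ ∀ U : Set X, IsOpen U → U.Nonempty →
    ∃ 𝒱 : Set (Set X), (∀ V ∈ 𝒱, IsOpen V) ∧ #𝒱 ≤ κ ∧
      (⋂₀ 𝒱).Nonempty ∧ (⋂ V ∈ 𝒱, closure V) ⊆ U}

/-- A space is an nq-space if its nonquasiregularity degree is defined. -/
def IsNqSpace (X : Type u) [TopologicalSpace X] : Prop :=
  (nqSet X).Nonempty

/-- The nonquasiregularity degree of a space. -/
noncomputable def nq (X : Type u) [TopologicalSpace X] : Cardinal.{u} :=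
  sInf (nqSet X)

/-- The closed pseudocharacter at a point. -/
noncomputable def psiCPoint (X : Type u) [TopologicalSpace X] (x : X) : Cardinal.{u} :=
  sInf {κ : Cardinal.{u} | ℵ₀ ≤ κ ∧ ∃ 𝒱 : Set (Set X),
    (∀ V ∈ 𝒱, IsOpen V ∧ x ∈ V) ∧ #𝒱 ≤ κ ∧ (⋂ V ∈ 𝒱, closure V) = {x}}

/-- The closed pseudocharacter of a space. -/
noncomputable def psiC (X : Type u) [TopologicalSpace X] : Cardinal.{u} :=
  sInf {κ : Cardinal.{u} | ℵ₀ ≤ κ ∧ ∀ x : X, ∃ 𝒱 : Set (Set X),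
    (∀ V ∈ 𝒱, IsOpen V ∧ x ∈ V) ∧ #𝒱 ≤ κ ∧ (⋂ V ∈ 𝒱, closure V) = {x}}

/-- The dense closed pseudocharacter of a space. -/
noncomputable def dPsiC (X : Type u) [TopologicalSpace X] : Cardinal.{u} :=
  sInf {κ : Cardinal.{u} | ℵ₀ ≤ κ ∧ ∃ D : Set X, Dense D ∧ ∀ d ∈ D, psiCPoint X d ≤ κ}

/-- The weak closed pseudocharacter at a point: the least infinite cardinality of a
family 𝒱 of open sets with ⋂_{V ∈ 𝒱} cl V = {x}. -/
noncomputable def wPsiCPoint (X : Type u) [TopologicalSpace X] (x : X) : Cardinal.{u} :=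
  sInf {κ : Cardinal.{u} | ℵ₀ ≤ κ ∧ ∃ 𝒱 : Set (Set X),
    (∀ V ∈ 𝒱, IsOpen V) ∧ #𝒱 ≤ κ ∧ (⋂ V ∈ 𝒱, closure V) = {x}}

/-- The weak closed pseudocharacter of a space. -/
noncomputable def wPsiC (X : Type u) [TopologicalSpace X] : Cardinal.{u} :=
  ⨆ x : X, wPsiCPoint X x

/-- The pseudocharacter of a space: the least infinite cardinal κ such that every
point is the intersection of at most κ open sets. -/
noncomputable def psi (X : Type u) [TopologicalSpace X] : Cardinal.{u} :=
  sInf {κ : Cardinal.{u} | ℵ₀ ≤ κ ∧ ∀ x : X, ∃ 𝒱 : Set (Set X),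
    (∀ V ∈ 𝒱, IsOpen V) ∧ #𝒱 ≤ κ ∧ ⋂₀ 𝒱 = {x}}

/-- The Lindelöf degree of a space. -/
noncomputable def lindelofDegree (X : Type u) [TopologicalSpace X] : Cardinal.{u} :=
  sInf {κ : Cardinal.{u} | ℵ₀ ≤ κ ∧ ∀ 𝒰 : Set (Set X), (∀ U ∈ 𝒰, IsOpen U) →
    ⋃₀ 𝒰 = Set.univ → ∃ 𝒱 ⊆ 𝒰, #𝒱 ≤ κ ∧ ⋃₀ 𝒱 = Set.univ}

/-- The cardinality of the collection of regular open subsets of a space. -/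
noncomputable def cardRO (X : Type u) [TopologicalSpace X] : Cardinal.{u} :=
  #{R : Set X | R = interior (closure R)}

/-- A space is quasiregular if every nonempty open set contains a nonempty open
set whose closure is contained in it. -/
def Quasiregular (X : Type u) [TopologicalSpace X] : Prop :=
  ∀ U : Set X, IsOpen U → U.Nonempty →
    ∃ V : Set X, IsOpen V ∧ V.Nonempty ∧ closure V ⊆ U


/-! Šapirovskiĭ's closing-off argument. Fix local π-bases `V x` of size `≤ πχ(X)` and put
`μ = πχ(X)^c(X)`. Build `A` of size `≤ μ` such that whenever `𝒲` is a family of at most `c(X)`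
members of `⋃_{a ∈ A} V a` whose union is not dense, `A` has a point outside `cl ⋃ 𝒲`; a
recursion of length `c(X)⁺` does it, since `c(X)⁺` is regular and `μ^c(X) = μ`. If `A` were not
dense, quasiregularity gives a nonempty open `U` with `cl U ∩ A = ∅`; a maximal disjoint family
`𝒲` of members of `⋃_{a ∈ A} V a` missing `U` has size `≤ c(X)` and `x ∉ cl ⋃ 𝒲` for `x ∈ U`,
so some `y ∈ A` lies outside `cl ⋃ 𝒲 ∪ cl U`, and a member of `V y` inside that complement
could be added to `𝒲`. -/

theorem dens_le_mk {X : Type u} [TopologicalSpace X] {D : Set X} (hD : Dense D) :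
    dens X ≤ #D :=
  csInf_le' ⟨D, hD, rfl⟩

theorem cellularity_spec (X : Type u) [TopologicalSpace X] :
    ℵ₀ ≤ cellularity X ∧ ∀ 𝒞 : Set (Set X),
      (∀ U ∈ 𝒞, IsOpen U ∧ U.Nonempty) → 𝒞.PairwiseDisjoint id → #𝒞 ≤ cellularity X :=
  csInf_mem (s := {κ | ℵ₀ ≤ κ ∧ _}) ⟨max #(Set X) ℵ₀, le_max_right _ _,
    fun 𝒞 _ _ => (mk_set_le 𝒞).trans (le_max_left _ _)⟩

theorem piCharPoint_spec (X : Type u) [TopologicalSpace X] (x : X) :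
    ℵ₀ ≤ piCharPoint X x ∧ ∃ 𝒱 : Set (Set X), IsLocalPiBase X x 𝒱 ∧ #𝒱 ≤ piCharPoint X x :=
  csInf_mem (s := {κ | ℵ₀ ≤ κ ∧ _}) ⟨max #(Set X) ℵ₀, le_max_right _ _,
    {V | IsOpen V ∧ V.Nonempty},
    ⟨fun _ hV => hV, fun U hU hxU => ⟨U, ⟨hU, x, hxU⟩, subset_rfl⟩⟩,
    (mk_set_le _).trans (le_max_left _ _)⟩

theorem piCharPoint_le_piChar {X : Type u} [TopologicalSpace X] (x : X) :
    piCharPoint X x ≤ piChar X :=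
  le_ciSup bddAbove_of_small x

theorem aleph0_le_piChar (X : Type u) [TopologicalSpace X] [Nonempty X] : ℵ₀ ≤ piChar X :=
  (piCharPoint_spec X (Classical.arbitrary X)).1.trans (piCharPoint_le_piChar _)

theorem exists_isLocalPiBase_mk_le_piChar {X : Type u} [TopologicalSpace X] (x : X) :
    ∃ 𝒱 : Set (Set X), IsLocalPiBase X x 𝒱 ∧ #𝒱 ≤ piChar X :=
  let ⟨𝒱, h𝒱, hcard⟩ := (piCharPoint_spec X x).2
  ⟨𝒱, h𝒱, hcard.trans (piCharPoint_le_piChar x)⟩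

theorem Quasiregular.of_regularSpace (X : Type u) [TopologicalSpace X] [RegularSpace X] :
    Quasiregular X := fun _ hU ⟨x, hx⟩ =>
  let ⟨V, hV, hxV, hVU⟩ := isCompact_singleton.exists_isOpen_closure_subset
    (hU.mem_nhdsSet.2 (singleton_subset_iff.2 hx))
  ⟨V, hV, ⟨x, hxV rfl⟩, hVU⟩

theorem Cardinal.mk_iUnion_le_of_forall_le {α ι : Type u} {f : ι → Set α} {μ : Cardinal.{u}}
    (hμ : ℵ₀ ≤ μ) (hι : #ι ≤ μ) (hf : ∀ i, #(f i) ≤ μ) : #(⋃ i, f i) ≤ μ :=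
  calc #(⋃ i, f i) ≤ #ι * ⨆ i, #(f i) := mk_iUnion_le f
    _ ≤ μ * μ := mul_le_mul' hι (ciSup_le' hf)
    _ = μ := mul_eq_self hμ

theorem Cardinal.exists_forall_lt_of_mk_le_toType_ord_succ {κ : Cardinal.{u}} (hκ : ℵ₀ ≤ κ)
    {γ : Type u} (f : γ → (Order.succ κ).ord.ToType) (hγ : #γ ≤ κ) : ∃ b, ∀ x, f x < b := by
  have hcof : Order.cof (Order.succ κ).ord.ToType = Order.succ κ := by
    rw [Ordinal.cof_toType, (isRegular_succ hκ).cof_ord]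
  have hf : ¬ IsCofinal (range f) := fun h =>
    (Order.lt_succ_of_not_isMax (not_isMax κ)).not_ge <|
      hcof ▸ (Order.cof_le h).trans (mk_range_le.trans hγ)
  obtain ⟨b, hb⟩ := not_isCofinal_iff.1 hf
  exact ⟨b, fun x => hb _ (mem_range_self x)⟩

section IterateUnionLT

variable {α ι : Type u} [LT ι] [WellFoundedLT ι]

noncomputable def iterateUnionLT (S : Set α → Set α) : ι → Set α :=
  wellFounded_lt.fix fun i rec => S (⋃ j : {j // j < i}, rec j.1 j.2)

theorem iterateUnionLT_eq (S : Set α → Set α) (i : ι) :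
    iterateUnionLT S i = S (⋃ j : {j // j < i}, iterateUnionLT S j.1) :=
  wellFounded_lt.fix_eq _ _

theorem mk_iterateUnionLT_le {S : Set α → Set α} {μ : Cardinal.{u}} (hμ : ℵ₀ ≤ μ)
    (hι : #ι ≤ μ) (hS : ∀ B : Set α, #B ≤ μ → #(S B) ≤ μ) (i : ι) :
    #(iterateUnionLT S i) ≤ μ := by
  induction i using WellFoundedLT.induction with
  | ind i ih =>
    rw [iterateUnionLT_eq]
    exact hS _ (mk_iUnion_le_of_forall_le hμ ((mk_subtype_le _).trans hι) fun j => ih j.1 j.2)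

end IterateUnionLT

theorem exists_mk_le_and_closed_under_small_families {α β : Type u} (V : α → Set β)
    (w : Set β → α) {κ μ : Cardinal.{u}} (hκ : ℵ₀ ≤ κ) (hμ : ℵ₀ ≤ μ) (hμκ : μ ^ κ = μ)
    (hV : ∀ a, #(V a) ≤ μ) :
    ∃ A : Set α, #A ≤ μ ∧ ∀ 𝒲 ⊆ ⋃ a ∈ A, V a, #𝒲 ≤ κ → w 𝒲 ∈ A := by
  set S : Set α → Set α := fun B => w '' {𝒲 | 𝒲 ⊆ ⋃ a ∈ B, V a ∧ #𝒲 ≤ κ}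
  have hS : ∀ B : Set α, #B ≤ μ → #(S B) ≤ μ := fun B hB =>
    calc #(S B) ≤ #{𝒲 // 𝒲 ⊆ ⋃ a ∈ B, V a ∧ #𝒲 ≤ κ} := mk_image_le
      _ ≤ max #(⋃ a ∈ B, V a) ℵ₀ ^ κ := mk_bounded_subset_le _ κ
      _ ≤ μ ^ κ := by
        refine power_le_power_right (max_le ?_ hμ)
        rw [biUnion_eq_iUnion]
        exact mk_iUnion_le_of_forall_le hμ hB fun a => hV a
      _ = μ := hμκ
  have hκμ : Order.succ κ ≤ μ := Order.succ_le_of_lt <|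
    calc κ < 2 ^ κ := cantor κ
      _ ≤ μ ^ κ := power_le_power_right (ofNat_le_aleph0.trans hμ)
      _ = μ := hμκ
  have hι : #(Order.succ κ).ord.ToType ≤ μ := by rwa [mk_toType, card_ord]
  refine ⟨⋃ i, iterateUnionLT S i,
    mk_iUnion_le_of_forall_le hμ hι (mk_iterateUnionLT_le hμ hι hS), fun 𝒲 h𝒲 hcard => ?_⟩
  have hstage : ∀ W : 𝒲, ∃ i : (Order.succ κ).ord.ToType, W.1 ∈ ⋃ a ∈ iterateUnionLT S i, V a :=
    fun W => by
      obtain ⟨a, ha, hW⟩ := mem_iUnion₂.1 (h𝒲 W.2)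
      obtain ⟨i, hai⟩ := mem_iUnion.1 ha
      exact ⟨i, mem_biUnion hai hW⟩
  choose f hf using hstage
  obtain ⟨b, hb⟩ := exists_forall_lt_of_mk_le_toType_ord_succ hκ f hcard
  refine mem_iUnion.2 ⟨b, ?_⟩
  rw [iterateUnionLT_eq]
  refine ⟨𝒲, ⟨fun W hW => ?_, hcard⟩, rfl⟩
  exact biUnion_subset_biUnion_left (subset_iUnion_of_subset ⟨f ⟨W, hW⟩, hb _⟩ subset_rfl)
    (hf ⟨W, hW⟩)

theorem exists_pairwiseDisjoint_subset_forall_inter_nonempty {α : Type u} (𝒮 : Set (Set α)) :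
    ∃ 𝒲 ⊆ 𝒮, 𝒲.PairwiseDisjoint id ∧ ∀ Q ∈ 𝒮, Q.Nonempty → ∃ W ∈ 𝒲, (Q ∩ W).Nonempty := by
  obtain ⟨𝒲, h𝒲⟩ := zorn_subset {𝒲 | 𝒲 ⊆ 𝒮 ∧ 𝒲.PairwiseDisjoint id} fun c hc hchain =>
    ⟨⋃₀ c, ⟨sUnion_subset fun _ h => (hc h).1,
      (pairwiseDisjoint_sUnion hchain.directedOn).2 fun _ h => (hc h).2⟩,
      fun _ => subset_sUnion_of_mem⟩
  refine ⟨𝒲, h𝒲.prop.1, h𝒲.prop.2, fun Q hQ hQne => ?_⟩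
  by_contra! hdisj
  have hins : insert Q 𝒲 ⊆ 𝒲 := h𝒲.eq_of_subset
    ⟨insert_subset hQ h𝒲.prop.1, pairwiseDisjoint_insert.2 ⟨h𝒲.prop.2,
      fun W hW _ => disjoint_iff_inter_eq_empty.2 (hdisj W hW)⟩⟩
    (subset_insert Q 𝒲) |>.symm.subset
  exact hQne.ne_empty (inter_self Q ▸ hdisj Q (hins (mem_insert Q 𝒲)))

theorem dense_of_forall_exists_notMem_closure_sUnion {X : Type u} [TopologicalSpace X]
    (hX : Quasiregular X) {V : X → Set (Set X)} (hV : ∀ x, IsLocalPiBase X x (V x)) {A : Set X}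
    (hA : ∀ 𝒲 ⊆ ⋃ a ∈ A, V a, #𝒲 ≤ cellularity X → (closure (⋃₀ 𝒲))ᶜ.Nonempty →
      ∃ y ∈ A, y ∉ closure (⋃₀ 𝒲)) :
    Dense A := by
  by_contra hAd
  obtain ⟨U, hU, hUne, hUA⟩ := hX _ isClosed_closure.isOpen_compl
    (nonempty_compl.2 (mt dense_iff_closure_eq.2 hAd))
  obtain ⟨𝒲, h𝒲, h𝒲disj, h𝒲max⟩ :=
    exists_pairwiseDisjoint_subset_forall_inter_nonempty {Q ∈ ⋃ a ∈ A, V a | Disjoint Q U}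
  have h𝒲open : ∀ Q ∈ 𝒲, IsOpen Q ∧ Q.Nonempty := fun Q hQ => by
    obtain ⟨a, -, hQa⟩ := mem_iUnion₂.1 (h𝒲 hQ).1
    exact (hV a).1 Q hQa
  have hU𝒲 : Disjoint U (closure (⋃₀ 𝒲)) :=
    (disjoint_sUnion_right.2 fun Q hQ => (h𝒲 hQ).2.symm).closure_right hU
  obtain ⟨y, hyA, hy𝒲⟩ := hA 𝒲 (fun Q hQ => (h𝒲 hQ).1)
    ((cellularity_spec X).2 𝒲 h𝒲open h𝒲disj) (hUne.mono (subset_compl_iff_disjoint_right.2 hU𝒲))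
  have hyU : y ∉ closure U := fun h => hUA h (subset_closure hyA)
  obtain ⟨Q, hQy, hQ⟩ := (hV y).2 _
    (isClosed_closure.isOpen_compl.inter isClosed_closure.isOpen_compl) ⟨hy𝒲, hyU⟩
  obtain ⟨W, hW, z, hzQ, hzW⟩ := h𝒲max Q
    ⟨mem_biUnion hyA hQy, (subset_compl_iff_disjoint_right.1 fun _ h => (hQ h).2).mono_right
      subset_closure⟩ ((hV y).1 Q hQy).2
  exact (hQ hzQ).1 (subset_closure ⟨W, hW, hzW⟩)

/-- If `X` is regular then `d(X) ≤ πχ(X)^(c(X))`. -/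
theorem stmt_5 (X : Type u) [TopologicalSpace X] [RegularSpace X] :
    dens X ≤ piChar X ^ cellularity X := by
  rcases isEmpty_or_nonempty X with hX | hX
  · exact (dens_le_mk dense_univ).trans (by simp)
  choose V hV hVκ using exists_isLocalPiBase_mk_le_piChar (X := X)
  have hc := (cellularity_spec X).1
  have hκμ : piChar X ≤ piChar X ^ cellularity X := self_le_power _ (one_le_aleph0.trans hc)
  let w : Set (Set X) → X := fun 𝒲 => Classical.epsilon (· ∉ closure (⋃₀ 𝒲))
  obtain ⟨A, hAμ, hAw⟩ := exists_mk_le_and_closed_under_small_families V w hc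
    ((aleph0_le_piChar X).trans hκμ) (by rw [← power_mul, mul_eq_self hc])
    fun x => (hVκ x).trans hκμ
  have hA : Dense A := dense_of_forall_exists_notMem_closure_sUnion
    (Quasiregular.of_regularSpace X) hV fun 𝒲 h𝒲 hcard hne =>
      ⟨w 𝒲, hAw 𝒲 h𝒲 hcard, Classical.epsilon_spec hne⟩
  exact (dens_le_mk hA).trans hAμ
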